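/- arXiv:1310.5168 — 2 statements merged into one kernel-verified Lean document; each statement's English description precedes it below -/
import Mathlib

section
/- Let A be an N×N real matrix and P an N×N permutation matrix such that AP is diagonal. Then (Pᵀ - I)AᵀA(P - I) = (P - I)AAᵀ(Pᵀ - I). -/
/-!
A 0-1 matrix with exactly one 1 in each row and column is the permutation matrix of some `σ`,
hence orthogonal. Writing `D = A * P`, which is diagonal and so symmetric, we get `A = D * Pᵀ` and
`Aᵀ = P * D`; since `(Pᵀ - 1) * P = -(P - 1)` and `Pᵀ * (P - 1) = -(Pᵀ - 1)`, both sides equal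
`(P - 1) * D * D * (Pᵀ - 1)`.
-/

open Matrix Equiv

theorem Matrix.exists_perm_permMatrix_eq {n R : Type*} [DecidableEq n] [Finite n] [Zero R] [One R]
    {P : Matrix n n R} (h01 : ∀ i j, P i j = 0 ∨ P i j = 1) (hrow : ∀ i, ∃! j, P i j = 1)
    (hcol : ∀ j, ∃! i, P i j = 1) : ∃ σ : Perm n, σ.permMatrix R = P := by
  choose f hf hf_unique using hrow
  have hinj : f.Injective := fun i i' h => (hcol (f i)).unique (hf i) (h ▸ hf i')
  refine ⟨Equiv.ofBijective f hinj.bijective_of_finite, ?_⟩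
  ext i j
  simp only [Perm.permMatrix, PEquiv.toMatrix_apply, toPEquiv_apply, Option.mem_some_iff,
    ofBijective_apply]
  split_ifs with h
  · exact h ▸ (hf i).symm
  · exact ((h01 i j).resolve_right fun h1 => h (hf_unique i j h1).symm).symm

theorem Matrix.permMatrix_mul_transpose {n R : Type*} [DecidableEq n] [Fintype n]
    [NonAssocSemiring R] (σ : Perm n) : σ.permMatrix R * (σ.permMatrix R)ᵀ = 1 := by
  rw [transpose_permMatrix, ← permMatrix_mul, inv_mul_cancel, permMatrix_one]

theorem Matrix.conj_sub_one_gram_eq_of_mul_isSymm {n R : Type*} [DecidableEq n] [Fintype n]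
    [CommRing R] {A P : Matrix n n R} (hP : P * Pᵀ = 1) (hAP : (A * P).IsSymm) :
    (Pᵀ - 1) * Aᵀ * A * (P - 1) = (P - 1) * A * Aᵀ * (Pᵀ - 1) := by
  have hP' : Pᵀ * P = 1 := mul_eq_one_comm.mp hP
  set D := A * P
  have hA : A = D * Pᵀ := by rw [Matrix.mul_assoc, hP, Matrix.mul_one]
  have hAt : Aᵀ = P * D := by rw [hA, transpose_mul, transpose_transpose, hAP.eq]
  calc (Pᵀ - 1) * Aᵀ * A * (P - 1)
      = (Pᵀ * P - P) * D * D * (Pᵀ * P - Pᵀ) := by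
        rw [hAt, hA]
        simp only [Matrix.mul_sub, Matrix.sub_mul, Matrix.mul_assoc, Matrix.mul_one,
          Matrix.one_mul]
    _ = (P - 1) * D * (Pᵀ * P) * D * (Pᵀ - 1) := by rw [hP']; noncomm_ring
    _ = (P - 1) * A * Aᵀ * (Pᵀ - 1) := by rw [hAt, hA]; simp only [Matrix.mul_assoc]

theorem AP_diag_quadratic_identity (N : ℕ)
    (A P : Matrix (Fin N) (Fin N) ℝ)
    (hP01 : ∀ i j, P i j = 0 ∨ P i j = 1)
    (hProw : ∀ i, ∃! j, P i j = 1)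
    (hPcol : ∀ j, ∃! i, P i j = 1)
    (hAP : (A * P).IsDiag) :
    (Pᵀ - 1) * Aᵀ * A * (P - 1) = (P - 1) * A * Aᵀ * (Pᵀ - 1) := by
  obtain ⟨σ, rfl⟩ := exists_perm_permMatrix_eq hP01 hProw hPcol
  exact conj_sub_one_gram_eq_of_mul_isSymm (permMatrix_mul_transpose σ) hAP.isSymm
end

section
/- For every integer p ≥ 0, the sum over i from 1 to p+1 of i·C(2p+4, 2i+2) equals p·2^(2p+2) + 1. -/
/-!
Absorption, `(i + 1) * C(2p+4, 2i+2) = (p + 2) * C(2p+3, 2i+1)`, writes the sum (extended by its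
vanishing `i = 0` term) as `(p + 2)` times an odd-index binomial sum minus an even-index one. By
Pascal's rule each of these collapses to a full row of binomial coefficients, `2 ^ (2p+2)` and
`2 ^ (2p+3) - 1` respectively.
-/

open Finset

theorem Finset.sum_range_two_mul {M : Type*} [AddCommMonoid M] (f : ℕ → M) (m : ℕ) :
    ∑ k ∈ range (2 * m), f k = ∑ i ∈ range m, (f (2 * i) + f (2 * i + 1)) := by
  induction m with
  | zero => simp
  | succ m ih =>
    rw [mul_add, mul_one, sum_range_succ, sum_range_succ, sum_range_succ, ih, add_assoc]

theorem Nat.sum_range_choose_of_lt {n m : ℕ} (h : n < m) : ∑ k ∈ range m, n.choose k = 2 ^ n := by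
  rw [← Nat.sum_range_choose]
  exact (sum_subset (range_subset_range.2 h) fun k _ hk =>
    Nat.choose_eq_zero_of_lt (by simpa using hk)).symm

theorem Nat.sum_range_choose_odd {n m : ℕ} (h : n < 2 * m) :
    ∑ i ∈ range m, (n + 1).choose (2 * i + 1) = 2 ^ n := by
  simp only [Nat.choose_succ_succ']
  rw [← sum_range_two_mul (n.choose ·), Nat.sum_range_choose_of_lt h]

theorem Nat.sum_range_choose_even {n m : ℕ} (h : n < 2 * m) :
    ∑ i ∈ range (m + 1), (n + 1).choose (2 * i) = 2 ^ n := by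
  rw [sum_range_succ', ← Nat.sum_range_choose_of_lt (Nat.lt_succ_of_lt h), sum_range_succ',
    sum_range_two_mul (fun k => n.choose (k + 1))]
  simp [Nat.choose_succ_succ', mul_add]

theorem Nat.add_one_mul_choose_two_mul_add_two (m i : ℕ) :
    (i + 1) * (2 * m + 2).choose (2 * i + 2) = (m + 1) * (2 * m + 1).choose (2 * i + 1) := by
  have h := Nat.add_one_mul_choose_eq (2 * m + 1) (2 * i + 1)
  linarith

theorem sum_i_choose_even_4 (p : ℕ) :
    ∑ i ∈ Finset.Icc 1 (p + 1), i * Nat.choose (2 * p + 4) (2 * i + 2) =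
      p * 2 ^ (2 * p + 2) + 1 := by
  have weighted : ∑ i ∈ range (p + 2), (i + 1) * (2 * p + 4).choose (2 * i + 2) =
      (p + 2) * 2 ^ (2 * p + 2) := by
    rw [show 2 * p + 4 = 2 * (p + 1) + 2 by ring]
    simp_rw [Nat.add_one_mul_choose_two_mul_add_two, ← mul_sum]
    rw [Nat.sum_range_choose_odd (by omega)]
    ring
  have unweighted : ∑ i ∈ range (p + 2), (2 * p + 4).choose (2 * i + 2) + 1 =
      2 ^ (2 * p + 3) := by
    have h := Nat.sum_range_choose_even (n := 2 * p + 3) (m := p + 2) (by omega)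
    rwa [sum_range_succ', Nat.choose_zero_right] at h
  have extend_to_zero : ∑ i ∈ Icc 1 (p + 1), i * (2 * p + 4).choose (2 * i + 2) =
      ∑ i ∈ range (p + 2), i * (2 * p + 4).choose (2 * i + 2) := by
    rw [sum_range_succ', zero_mul, add_zero, ← Ico_add_one_right_eq_Icc, sum_Ico_eq_sum_range,
      Nat.add_sub_cancel]
    simp only [add_comm 1]
  simp only [add_mul, one_mul, sum_add_distrib] at weighted
  rw [extend_to_zero]
  linarith [pow_succ 2 (2 * p + 2)]
end
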